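/- Let m ≥ 1 be an integer and r0 > 0 a real number. Then |I_1(m, r0)| ≤ (√(2m+3)/(m+1/2)) · r0^{−3/2} · (r0/2)² · exp((r0/2)²). -/
import Mathlib


open Real

/-- `I₁(m, r₀)` from the paper. -/
noncomputable def I1 (m : ℕ) (r0 : ℝ) : ℝ :=
  ∑' k : ℕ,
    ((-1 : ℝ) ^ (k + 1) * Real.Gamma ((m : ℝ) + 3 / 2) * Real.sqrt (2 * (m : ℝ) + 3) /
        ((Nat.factorial (k + 1) : ℝ) * Real.Gamma ((m : ℝ) + (k + 1 : ℕ) + 3 / 2))) *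
      (r0 / 2) ^ (2 * (k + 1)) * r0 ^ (-(3 / 2) : ℝ)

lemma gamma_ratio (m k : ℕ) :
    ((m : ℝ) + 1 / 2) * Real.Gamma ((m : ℝ) + 3 / 2) ≤
      Real.Gamma ((m : ℝ) + (k + 1 : ℕ) + 3 / 2) := by
  induction k with
  | zero =>
    have h : ((m : ℝ) + (0 + 1 : ℕ) + 3 / 2) = ((m : ℝ) + 3 / 2) + 1 := by push_cast; ring
    rw [h, Real.Gamma_add_one (by positivity)]
    have hΓ : 0 < Real.Gamma ((m : ℝ) + 3 / 2) :=
      Real.Gamma_pos_of_pos (by positivity)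
    nlinarith [hΓ]
  | succ n ih =>
    have h : ((m : ℝ) + (n + 1 + 1 : ℕ) + 3 / 2) = ((m : ℝ) + (n + 1 : ℕ) + 3 / 2) + 1 := by
      push_cast; ring
    rw [h, Real.Gamma_add_one (by positivity)]
    have hΓ : 0 < Real.Gamma ((m : ℝ) + (n + 1 : ℕ) + 3 / 2) :=
      Real.Gamma_pos_of_pos (by positivity)
    have h1 : (1 : ℝ) ≤ (m : ℝ) + (n + 1 : ℕ) + 3 / 2 := by
      have : (0:ℝ) ≤ (m:ℝ) := Nat.cast_nonneg m
      push_cast; linarith [Nat.cast_nonneg (α := ℝ) n]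
    nlinarith [hΓ]

theorem abs_I1_le (m : ℕ) (hm : 1 ≤ m) (r0 : ℝ) (hr0 : 0 < r0) :
    |I1 m r0| ≤
      Real.sqrt (2 * (m : ℝ) + 3) / ((m : ℝ) + 1 / 2) * r0 ^ (-(3 / 2) : ℝ) *
        (r0 / 2) ^ 2 * Real.exp ((r0 / 2) ^ 2) := by
  set x : ℝ := (r0 / 2) ^ 2 with hxdef
  have hx : 0 < x := by positivity
  set C : ℝ := Real.sqrt (2 * (m : ℝ) + 3) / ((m : ℝ) + 1 / 2) * r0 ^ (-(3 / 2) : ℝ) * x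
    with hCdef
  have hC : 0 ≤ C := by positivity
  have hm2 : (0:ℝ) < (m : ℝ) + 1 / 2 := by positivity
  have hsum : HasSum (fun k : ℕ => C * (x ^ k / (Nat.factorial k : ℝ))) (C * Real.exp x) := by
    have h1 : HasSum (fun k : ℕ => x ^ k / (Nat.factorial k : ℝ)) (Real.exp x) := by
      have := (Real.summable_pow_div_factorial x).hasSum
      rwa [show (∑' n : ℕ, x ^ n / (Nat.factorial n : ℝ)) = Real.exp x by
        rw [Real.exp_eq_exp_ℝ, NormedSpace.exp_eq_tsum_div]] at this
    exact h1.mul_left C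
  have key : ∀ k : ℕ,
      |((-1 : ℝ) ^ (k + 1) * Real.Gamma ((m : ℝ) + 3 / 2) * Real.sqrt (2 * (m : ℝ) + 3) /
          ((Nat.factorial (k + 1) : ℝ) * Real.Gamma ((m : ℝ) + (k + 1 : ℕ) + 3 / 2))) *
        (r0 / 2) ^ (2 * (k + 1)) * r0 ^ (-(3 / 2) : ℝ)| ≤
      C * (x ^ k / (Nat.factorial k : ℝ)) := by
    intro k
    have hΓ1 : 0 < Real.Gamma ((m : ℝ) + 3 / 2) := Real.Gamma_pos_of_pos (by positivity)
    have hΓ2 : 0 < Real.Gamma ((m : ℝ) + (k + 1 : ℕ) + 3 / 2) :=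
      Real.Gamma_pos_of_pos (by positivity)
    have hfac : 0 < ((Nat.factorial (k + 1) : ℝ)) := by positivity
    have habs : |((-1 : ℝ) ^ (k + 1) * Real.Gamma ((m : ℝ) + 3 / 2) * Real.sqrt (2 * (m : ℝ) + 3) /
          ((Nat.factorial (k + 1) : ℝ) * Real.Gamma ((m : ℝ) + (k + 1 : ℕ) + 3 / 2))) *
        (r0 / 2) ^ (2 * (k + 1)) * r0 ^ (-(3 / 2) : ℝ)| =
        (Real.Gamma ((m : ℝ) + 3 / 2) * Real.sqrt (2 * (m : ℝ) + 3) /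
          ((Nat.factorial (k + 1) : ℝ) * Real.Gamma ((m : ℝ) + (k + 1 : ℕ) + 3 / 2))) *
        x ^ (k + 1) * r0 ^ (-(3 / 2) : ℝ) := by
      rw [show (r0 / 2) ^ (2 * (k + 1)) = x ^ (k + 1) by rw [hxdef, ← pow_mul]]
      rw [abs_mul, abs_mul, abs_div, abs_mul, abs_mul, abs_pow, abs_neg, abs_one, one_pow,
        one_mul, abs_of_pos hΓ1, abs_of_nonneg (Real.sqrt_nonneg _),
        abs_of_pos (mul_pos hfac hΓ2), abs_of_nonneg (pow_nonneg hx.le _),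
        abs_of_pos (Real.rpow_pos_of_pos hr0 _)]
    rw [habs]
    -- bound the gamma ratio and factorial
    have hratio : Real.Gamma ((m : ℝ) + 3 / 2) /
        ((Nat.factorial (k + 1) : ℝ) * Real.Gamma ((m : ℝ) + (k + 1 : ℕ) + 3 / 2)) ≤
        1 / (((m : ℝ) + 1 / 2) * (Nat.factorial (k + 1) : ℝ)) := by
      rw [div_le_div_iff₀ (by positivity) (by positivity)]
      have := gamma_ratio m k
      nlinarith [hfac, hΓ1]
    have hfac2 : (Nat.factorial k : ℝ) ≤ (Nat.factorial (k + 1) : ℝ) := by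
      exact_mod_cast Nat.factorial_le (Nat.le_succ k)
    have hfk : 0 < (Nat.factorial k : ℝ) := by positivity
    have step1 : (Real.Gamma ((m : ℝ) + 3 / 2) * Real.sqrt (2 * (m : ℝ) + 3) /
          ((Nat.factorial (k + 1) : ℝ) * Real.Gamma ((m : ℝ) + (k + 1 : ℕ) + 3 / 2))) ≤
        Real.sqrt (2 * (m : ℝ) + 3) / (((m : ℝ) + 1 / 2) * (Nat.factorial (k + 1) : ℝ)) := by
      have hs : 0 ≤ Real.sqrt (2 * (m : ℝ) + 3) := Real.sqrt_nonneg _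
      calc Real.Gamma ((m : ℝ) + 3 / 2) * Real.sqrt (2 * (m : ℝ) + 3) /
            ((Nat.factorial (k + 1) : ℝ) * Real.Gamma ((m : ℝ) + (k + 1 : ℕ) + 3 / 2))
          = Real.sqrt (2 * (m : ℝ) + 3) * (Real.Gamma ((m : ℝ) + 3 / 2) /
            ((Nat.factorial (k + 1) : ℝ) * Real.Gamma ((m : ℝ) + (k + 1 : ℕ) + 3 / 2))) := by
            ring
        _ ≤ Real.sqrt (2 * (m : ℝ) + 3) *
            (1 / (((m : ℝ) + 1 / 2) * (Nat.factorial (k + 1) : ℝ))) :=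
            mul_le_mul_of_nonneg_left hratio hs
        _ = Real.sqrt (2 * (m : ℝ) + 3) / (((m : ℝ) + 1 / 2) * (Nat.factorial (k + 1) : ℝ)) := by
            ring
    have hr : 0 < r0 ^ (-(3 / 2) : ℝ) := Real.rpow_pos_of_pos hr0 _
    calc Real.Gamma ((m : ℝ) + 3 / 2) * Real.sqrt (2 * (m : ℝ) + 3) /
          ((Nat.factorial (k + 1) : ℝ) * Real.Gamma ((m : ℝ) + (k + 1 : ℕ) + 3 / 2)) *
          x ^ (k + 1) * r0 ^ (-(3 / 2) : ℝ)
        ≤ Real.sqrt (2 * (m : ℝ) + 3) / (((m : ℝ) + 1 / 2) * (Nat.factorial (k + 1) : ℝ)) *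
          x ^ (k + 1) * r0 ^ (-(3 / 2) : ℝ) := by
          apply mul_le_mul_of_nonneg_right _ hr.le
          exact mul_le_mul_of_nonneg_right step1 (pow_nonneg hx.le _)
      _ ≤ Real.sqrt (2 * (m : ℝ) + 3) / (((m : ℝ) + 1 / 2) * (Nat.factorial k : ℝ)) *
          x ^ (k + 1) * r0 ^ (-(3 / 2) : ℝ) := by
          apply mul_le_mul_of_nonneg_right _ hr.le
          apply mul_le_mul_of_nonneg_right _ (pow_nonneg hx.le _)
          apply div_le_div_of_nonneg_left (Real.sqrt_nonneg _) (by positivity)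
          exact mul_le_mul_of_nonneg_left hfac2 hm2.le
      _ = C * (x ^ k / (Nat.factorial k : ℝ)) := by
          rw [hCdef]
          field_simp
          ring
  have hb : |I1 m r0| ≤ C * Real.exp x := by
    rw [I1, ← Real.norm_eq_abs]
    exact tsum_of_norm_bounded hsum (fun k => by
      rw [Real.norm_eq_abs]; exact key k)
  calc |I1 m r0| ≤ C * Real.exp x := hb
    _ = Real.sqrt (2 * (m : ℝ) + 3) / ((m : ℝ) + 1 / 2) * r0 ^ (-(3 / 2) : ℝ) *
        (r0 / 2) ^ 2 * Real.exp ((r0 / 2) ^ 2) := by rw [hCdef]
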